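/- arXiv:1609.07288 — 3 statements merged into one kernel-verified Lean document; each statement's English description precedes it below -/
import Mathlib

section
/- Fix an integer $k \geq 1$. The function $f(x) = x e^{-1/(2x)} - 1 + (1 - e^{-1/x})^{k-1}$ is strictly increasing on $[1, \infty)$. -/
/-!
With `n = k - 1`, the derivative is
`e^{-1/(2x)} (1 + 1/(2x)) - n (1 - e^{-1/x})^{n-1} e^{-1/x} / x²`.
For `x ≥ 1` we have `1 - e^{-1/x} ≤ 1 - e⁻¹ ≤ 2/3` and `n (2/3)^{n-1} ≤ 4/3` for every `n`
(the maximum is attained at `n = 2, 3`), while `e^{-1/x} ≤ e^{-1/(2x)}`. Hence the negative part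
is at most `(4/3) e^{-1/(2x)} / x²`, which is smaller than `e^{-1/(2x)} (1 + 1/(2x))` for `x ≥ 1`.
-/

open Real

noncomputable def phaseGap (n : ℕ) (x : ℝ) : ℝ :=
  x * exp (-1 / (2 * x)) - 1 + (1 - exp (-1 / x)) ^ n

theorem natCast_mul_two_thirds_pow_pred_le (n : ℕ) : (n : ℝ) * (2 / 3) ^ (n - 1) ≤ 4 / 3 := by
  obtain _ | _ | n := n
  · norm_num
  · norm_num
  induction n with
  | zero => norm_num
  | succ n ih =>
    simp only [Nat.add_sub_cancel, Nat.cast_add, Nat.cast_one, pow_succ] at ih ⊢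
    nlinarith [pow_nonneg (by norm_num : (0 : ℝ) ≤ 2 / 3) n]

theorem natCast_mul_pow_pred_le {a : ℝ} (ha₀ : 0 ≤ a) (ha : a ≤ 2 / 3) (n : ℕ) :
    (n : ℝ) * a ^ (n - 1) ≤ 4 / 3 :=
  (mul_le_mul_of_nonneg_left (pow_le_pow_left₀ ha₀ ha _) n.cast_nonneg).trans
    (natCast_mul_two_thirds_pow_pred_le n)

theorem hasDerivAt_exp_neg_one_div_mul {c x : ℝ} (hc : c ≠ 0) (hx : x ≠ 0) :
    HasDerivAt (fun x => exp (-1 / (c * x))) (exp (-1 / (c * x)) / (c * x ^ 2)) x := by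
  have h : HasDerivAt (fun y => -c⁻¹ * y⁻¹) (1 / (c * x ^ 2)) x :=
    ((hasDerivAt_inv hx).const_mul _).congr_deriv (by field_simp)
  have hfun : (fun y => -c⁻¹ * y⁻¹) = fun y => -1 / (c * y) := by
    ext y; rw [neg_mul, neg_div, one_div, mul_inv]
  rw [hfun] at h
  simpa [div_eq_mul_inv] using h.exp

theorem hasDerivAt_phaseGap (n : ℕ) {x : ℝ} (hx : x ≠ 0) :
    HasDerivAt (phaseGap n)
      (exp (-1 / (2 * x)) * (1 + 1 / (2 * x))
        - n * (1 - exp (-1 / x)) ^ (n - 1) * (exp (-1 / x) / x ^ 2)) x := by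
  have h₂ := hasDerivAt_exp_neg_one_div_mul two_ne_zero hx
  have h₁ : HasDerivAt (fun x => exp (-1 / x)) (exp (-1 / x) / x ^ 2) x := by
    simpa using hasDerivAt_exp_neg_one_div_mul one_ne_zero hx
  refine ((((hasDerivAt_id' x).mul h₂).sub_const 1).add ((h₁.const_sub 1).pow n)).congr_deriv ?_
  field_simp
  ring

theorem one_sub_exp_neg_one_div_mem_Icc {x : ℝ} (hx : 1 ≤ x) :
    1 - exp (-1 / x) ∈ Set.Icc 0 (2 / 3) := by
  have hx₀ : 0 < x := one_pos.trans_le hx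
  constructor
  · rw [sub_nonneg, exp_le_one_iff]
    exact div_nonpos_of_nonpos_of_nonneg (by norm_num) hx₀.le
  · have : exp (-1) ≤ exp (-1 / x) := by
      gcongr
      rw [le_div_iff₀ hx₀]
      linarith
    linarith [exp_neg_one_gt_d9]

theorem deriv_phaseGap_pos (n : ℕ) {x : ℝ} (hx : 1 ≤ x) :
    0 < exp (-1 / (2 * x)) * (1 + 1 / (2 * x))
        - n * (1 - exp (-1 / x)) ^ (n - 1) * (exp (-1 / x) / x ^ 2) := by
  have hx₀ : 0 < x := one_pos.trans_le hx
  obtain ⟨hA₀, hA⟩ := one_sub_exp_neg_one_div_mem_Icc hx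
  have hE : exp (-1 / x) ≤ exp (-1 / (2 * x)) := by
    rw [exp_le_exp, div_le_div_iff₀ hx₀ (by positivity)]
    linarith
  have hq : 4 / 3 / x ^ 2 < 1 + 1 / (2 * x) := by
    rw [div_lt_iff₀ (by positivity), add_mul]
    field_simp
    nlinarith
  rw [sub_pos]
  calc n * (1 - exp (-1 / x)) ^ (n - 1) * (exp (-1 / x) / x ^ 2)
      ≤ 4 / 3 * (exp (-1 / (2 * x)) / x ^ 2) := by
        gcongr
        exact natCast_mul_pow_pred_le hA₀ hA n
    _ = exp (-1 / (2 * x)) * (4 / 3 / x ^ 2) := by ring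
    _ < exp (-1 / (2 * x)) * (1 + 1 / (2 * x)) := by gcongr

theorem strictMonoOn_phaseGap (n : ℕ) : StrictMonoOn (phaseGap n) (Set.Ici 1) := by
  have hderiv : ∀ x ∈ Set.Ici (1 : ℝ), HasDerivAt (phaseGap n)
      (exp (-1 / (2 * x)) * (1 + 1 / (2 * x))
        - n * (1 - exp (-1 / x)) ^ (n - 1) * (exp (-1 / x) / x ^ 2)) x :=
    fun x hx => hasDerivAt_phaseGap n (one_pos.trans_le hx).ne'
  refine strictMonoOn_of_deriv_pos (convex_Ici 1) (HasDerivAt.continuousOn hderiv) fun x hx => ?_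
  rw [interior_Ici] at hx
  rw [(hderiv x (Set.mem_Ici_of_Ioi hx)).deriv]
  exact deriv_phaseGap_pos n hx.le

theorem stmt_7_general (k : ℕ) :
    StrictMonoOn
      (fun x : ℝ => x * Real.exp (-1 / (2 * x)) - 1 + (1 - Real.exp (-1 / x)) ^ (k - 1))
      (Set.Ici 1) :=
  strictMonoOn_phaseGap (k - 1)

theorem stmt_7 (k : ℕ) (hk : 1 ≤ k) :
    StrictMonoOn
      (fun x : ℝ => x * Real.exp (-1 / (2 * x)) - 1 + (1 - Real.exp (-1 / x)) ^ (k - 1))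
      (Set.Ici 1) :=
  stmt_7_general k
end

section
/- For each integer $1 \leq k \leq 3$ and every real $x \geq 1$, we have $x e^{-1/(2x)} > 1 - (1 - e^{-1/x})^{k-1}$. -/
/-! With `t = exp (-1 / (2 * x))` we have `exp (-1 / x) = t ^ 2`, and the right-hand side only
grows with `k` because `0 ≤ 1 - t ^ 2 ≤ 1`. So only `k = 3` matters, where
`1 - (1 - t ^ 2) ^ 2 = t * (2 * t - t ^ 3)` and the claim becomes `2 * t - t ^ 3 < x`. This follows
from the third-order Taylor bound `exp (1 / (2 * x)) ≥ 1 + u + u ^ 2 / 2 + u ^ 3 / 6`,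
`u = 1 / (2 * x)`, by polynomial arithmetic; at `x = 1` the margin is only about `0.01`. -/

open Real

lemma one_add_add_sq_div_add_cube_div_le_exp {u : ℝ} (hu : 0 ≤ u) :
    1 + u + u ^ 2 / 2 + u ^ 3 / 6 ≤ exp u := by
  simpa [Finset.sum_range_succ, Nat.factorial] using sum_le_exp_of_nonneg hu 4

lemma exp_neg_inv_two_mul_mul_le {x : ℝ} (hx : 0 < x) :
    exp (-1 / (2 * x)) * (48 * x ^ 3 + 24 * x ^ 2 + 6 * x + 1) ≤ 48 * x ^ 3 := by
  have htaylor := one_add_add_sq_div_add_cube_div_le_exp (u := 1 / (2 * x)) (by positivity)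
  have hpoly : 48 * x ^ 3 + 24 * x ^ 2 + 6 * x + 1
      = 48 * x ^ 3 * (1 + 1 / (2 * x) + (1 / (2 * x)) ^ 2 / 2 + (1 / (2 * x)) ^ 3 / 6) := by
    field_simp
    ring
  have hinv : exp (-1 / (2 * x)) * exp (1 / (2 * x)) = 1 := by
    rw [← exp_add, neg_div, neg_add_cancel, exp_zero]
  calc exp (-1 / (2 * x)) * (48 * x ^ 3 + 24 * x ^ 2 + 6 * x + 1)
      ≤ 48 * x ^ 3 * (exp (-1 / (2 * x)) * exp (1 / (2 * x))) := by
        rw [hpoly, mul_left_comm]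
        gcongr
    _ = 48 * x ^ 3 := by rw [hinv, mul_one]

lemma two_mul_sub_pow_three_lt {x t : ℝ} (hx : 1 ≤ x) (ht : 0 < t)
    (hbound : t * (48 * x ^ 3 + 24 * x ^ 2 + 6 * x + 1) ≤ 48 * x ^ 3) :
    2 * t - t ^ 3 < x := by
  nlinarith [mul_nonneg (sq_nonneg (t - 3 / 5)) ht.le,
    mul_nonneg (sq_nonneg (t - 3 / 5)) (sub_nonneg.2 hx)]

lemma exp_neg_inv_eq_sq (x : ℝ) : exp (-1 / x) = exp (-1 / (2 * x)) ^ 2 := by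
  rw [← exp_nat_mul]
  congr 1
  by_cases hx : x = 0
  · simp [hx]
  · field_simp
    norm_num

lemma one_sub_one_sub_exp_neg_inv_sq_lt {x : ℝ} (hx : 1 ≤ x) :
    1 - (1 - exp (-1 / x)) ^ 2 < x * exp (-1 / (2 * x)) := by
  set t := exp (-1 / (2 * x))
  have ht : 0 < t := exp_pos _
  have hcube : 2 * t - t ^ 3 < x :=
    two_mul_sub_pow_three_lt hx ht (exp_neg_inv_two_mul_mul_le (by linarith))
  calc 1 - (1 - exp (-1 / x)) ^ 2 = t * (2 * t - t ^ 3) := by rw [exp_neg_inv_eq_sq]; ring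
    _ < t * x := by gcongr
    _ = x * t := mul_comm t x

theorem stmt_9_general (k : ℕ) (hk3 : k ≤ 3) (x : ℝ) (hx : 1 ≤ x) :
    x * Real.exp (-1 / (2 * x)) > 1 - (1 - Real.exp (-1 / x)) ^ (k - 1) := by
  have hexp_pos : 0 < exp (-1 / x) := exp_pos _
  have hexp_le : exp (-1 / x) ≤ 1 :=
    exp_le_one_iff.2 (div_nonpos_of_nonpos_of_nonneg (by norm_num) (by linarith))
  have hpow : (1 - exp (-1 / x)) ^ 2 ≤ (1 - exp (-1 / x)) ^ (k - 1) :=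
    pow_le_pow_of_le_one (by linarith) (by linarith) (by omega)
  linarith [one_sub_one_sub_exp_neg_inv_sq_lt hx]

theorem stmt_9 (k : ℕ) (hk1 : 1 ≤ k) (hk3 : k ≤ 3) (x : ℝ) (hx : 1 ≤ x) :
    x * Real.exp (-1 / (2 * x)) > 1 - (1 - Real.exp (-1 / x)) ^ (k - 1) :=
  stmt_9_general k hk3 x hx
end

section
/- In any instance with strict (possibly incomplete) preference lists augmented with last resort items, a popular matching exists if and only if an A-perfect matching exists, where a matching $M$ is A-perfect if every person $a$ is matched with either $f(a)$ (their top-choice item) or $s(a)$ (their highest-ranked item not in $F$, the set of items that are someone's top choice). -/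
/-! Popular matchings with strict, possibly incomplete preference lists,
augmented with last resort items.

People are elements of a finite type `A`, items of a finite type `B`.
Each person `a` has a strict preference list `pref a : List B` (no ties,
`Nodup`), ranking some of the items. The last resort item `ℓ_a` of `a` is
modelled by `none : Option B` (it is unique to `a`, ranked below all listed
items). A matching assigns to every person an item of their list or their
last resort item, with distinct people getting distinct real items. -/

namespace Stmt18

variable {A B : Type*} [Fintype A] [Fintype B] [DecidableEq A] [DecidableEq B]

/-- The rank of an (optional) item in `a`'s preference list; the last
resort item `none` is ranked below all listed items. -/
def rank (pref : A → List B) (a : A) : Option B → ℕ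
  | none => (pref a).length
  | some b => (pref a).idxOf b

/-- `M` is a matching: each person gets an item on their list or their own
last resort item, and no real item is assigned to two people. -/
def IsMatching (pref : A → List B) (M : A → Option B) : Prop :=
  (∀ a b, M a = some b → b ∈ pref a) ∧
    ∀ a a', M a ≠ none → M a = M a' → a = a'

/-- `M` is popular: for every matching `M'`, the number of people preferring
`M'` is at most the number of people preferring `M`. -/
def IsPopular (pref : A → List B) (M : A → Option B) : Prop :=
  ∀ M', IsMatching pref M' →
    {a | rank pref a (M' a) < rank pref a (M a)}.ncard ≤
      {a | rank pref a (M a) < rank pref a (M' a)}.ncard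

/-- `f a`: the top-choice item of `a` (the last resort item if `a`'s list is
empty). -/
def f (pref : A → List B) (a : A) : Option B :=
  (pref a).head?

/-- `F`: the set of items that are somebody's top choice. -/
def F (pref : A → List B) : Finset B :=
  Finset.univ.filter (fun b => ∃ a, f pref a = some b)

/-- `s a`: the most preferred item of `a` that is not in `F` (the last resort
item of `a` if every item on `a`'s list is in `F`). -/
def s (pref : A → List B) (a : A) : Option B :=
  (pref a).find? (fun b => b ∉ F pref)

/-- `M` is `A`-perfect if every person is matched with `f a` or `s a`. -/
def IsAPerfect (pref : A → List B) (M : A → Option B) : Prop :=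
  ∀ a, M a = f pref a ∨ M a = s pref a

end Stmt18

/-! A popular matching gives every item of `F` to a person ranking it first: otherwise hand the
item to such a person and, if it was taken, give its holder their own first choice, evicting at
most one person, so that two people gain and at most one loses. The same exchange shows that nobody
is worse off than with `s a`, while anything better than `s a` lies in `F` and hence is `f a`.

Conversely, let `M` be `A`-perfect with every item of `F` held by someone ranking it first. Whoever
prefers another matching `M'` gets under `M'` an item of `F`, whose `M`-holder then loses; this
injects the winners of `M'` into its losers. An `A`-perfect matching with the most people at their
first choice has this form, since an unmatched item of `F` could be handed to a person ranking it
first. -/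

lemma List.idxOf_le_idxOf_of_find?_eq_some {α : Type*} [BEq α] [LawfulBEq α] {l : List α}
    {p : α → Bool} {b c : α} (hb : b ∈ l) (hpb : p b) (hc : l.find? p = some c) :
    l.idxOf c ≤ l.idxOf b := by
  induction l with
  | nil => simp at hb
  | cons x t ih =>
    by_cases hpx : p x
    · obtain rfl : x = c := by simpa [List.find?_cons_of_pos hpx] using hc
      simp
    · have hbx : b ≠ x := by rintro rfl; exact hpx hpb
      have hcx : c ≠ x := by rintro rfl; exact hpx (List.find?_some hc)
      rw [List.find?_cons_of_neg hpx] at hc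
      rw [List.idxOf_cons_ne _ (Ne.symm hcx), List.idxOf_cons_ne _ (Ne.symm hbx)]
      exact Nat.succ_le_succ (ih (List.mem_of_ne_of_mem hbx hb) hc)

namespace Stmt18

section Matching

variable {A B : Type*} {pref : A → List B} {M : A → Option B} {a a' : A} {b : B}

lemma mem_pref_of_f_eq_some (h : f pref a = some b) : b ∈ pref a :=
  List.mem_of_head? h

lemma exists_f_eq_some_of_mem (hb : b ∈ pref a) : ∃ c, f pref a = some c :=
  Option.isSome_iff_exists.mp (List.isSome_head?.mpr (List.ne_nil_of_mem hb))

lemma IsMatching.eq_of_eq_some (hM : IsMatching pref M) (h : M a = some b) (h' : M a' = some b) :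
    a = a' :=
  hM.2 a a' (by simp [h]) (h.trans h'.symm)

lemma IsMatching.ncard_le_one [Finite A] (hM : IsMatching pref M) (b : B) :
    {a | M a = some b}.ncard ≤ 1 :=
  (Set.ncard_le_one_iff).mpr fun h h' => hM.eq_of_eq_some h h'

end Matching

section Rank

variable {A B : Type*} [DecidableEq B] {pref : A → List B} {a : A} {b : B} {o o' : Option B}

lemma rank_some_lt_rank_none (hb : b ∈ pref a) : rank pref a (some b) < rank pref a none :=
  List.idxOf_lt_length_iff.mpr hb

lemma rank_le_rank_none (ho : ∀ b ∈ o, b ∈ pref a) : rank pref a o ≤ rank pref a none := by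
  cases o with
  | none => exact le_rfl
  | some b => exact (rank_some_lt_rank_none (ho b rfl)).le

lemma eq_of_rank_eq (ho : ∀ b ∈ o, b ∈ pref a) (ho' : ∀ b ∈ o', b ∈ pref a)
    (h : rank pref a o = rank pref a o') : o = o' := by
  cases o <;> cases o'
  · rfl
  · exact absurd h (rank_some_lt_rank_none (ho' _ rfl)).ne'
  · exact absurd h (rank_some_lt_rank_none (ho _ rfl)).ne
  · exact congrArg some ((List.idxOf_inj (ho _ rfl)).mp h)

lemma rank_f : rank pref a (f pref a) = 0 := by
  cases h : pref a <;> simp [f, rank, h]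

lemma eq_f_of_rank_eq_zero (ho : ∀ b ∈ o, b ∈ pref a) (h : rank pref a o = 0) : o = f pref a :=
  eq_of_rank_eq ho (fun _ => mem_pref_of_f_eq_some) (h.trans rank_f.symm)

end Rank

section Exchange

variable {A B : Type*} [DecidableEq A] [DecidableEq B] {pref : A → List B} {M : A → Option B}
  {a x : A} {b : B}

def reassign (M : A → Option B) (a : A) (b : B) : A → Option B :=
  fun x => if x = a then some b else if M x = some b then none else M x

lemma reassign_self : reassign M a b a = some b := if_pos rfl

lemma reassign_of_ne (hx : x ≠ a) (hxb : M x ≠ some b) : reassign M a b x = M x := by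
  simp [reassign, hx, hxb]

lemma IsMatching.reassign (hM : IsMatching pref M) (hb : b ∈ pref a) :
    IsMatching pref (reassign M a b) := by
  constructor
  · intro x c hc
    unfold Stmt18.reassign at hc
    split_ifs at hc with hxa
    · cases hc; subst hxa; exact hb
    · exact hM.1 x c hc
  · intro x y hx hxy
    unfold Stmt18.reassign at hx hxy
    split_ifs at hx hxy <;> simp_all [hM.2 x y]

end Exchange

section Popular

variable {A B : Type*} [Finite A] [DecidableEq B] {pref : A → List B} {M M' : A → Option B}
  {a : A} {b : B}

lemma IsPopular.ncard_le_ncard (hpop : IsPopular pref M) (hM' : IsMatching pref M') {I W : Set A}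
    (hI : I ⊆ {a | rank pref a (M' a) < rank pref a (M a)})
    (hW : {a | rank pref a (M a) < rank pref a (M' a)} ⊆ W) : I.ncard ≤ W.ncard :=
  (Set.ncard_le_ncard hI).trans <| (hpop M' hM').trans (Set.ncard_le_ncard hW)

variable [DecidableEq A]

lemma IsPopular.exists_eq_some_of_rank_lt (hM : IsMatching pref M) (hpop : IsPopular pref M)
    (hb : b ∈ pref a) (hlt : rank pref a (some b) < rank pref a (M a)) :
    ∃ a', M a' = some b ∧ f pref a' = some b := by
  by_contra! hnot
  by_cases hfree : ∀ x, M x ≠ some b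
  · have hM' := hM.reassign hb
    have := hpop.ncard_le_ncard hM' (I := {a}) (W := ∅) (by simpa [reassign_self] using hlt) ?_
    · simp at this
    intro x (hx : rank pref x (M x) < rank pref x (reassign M a b x))
    have hxa : x ≠ a := by rintro rfl; rw [reassign_self] at hx; omega
    rw [reassign_of_ne hxa (hfree x)] at hx
    exact (lt_irrefl _ hx).elim
  obtain ⟨a₂, ha₂⟩ : ∃ a₂, M a₂ = some b := by simpa using hfree
  obtain ⟨c, hc⟩ := exists_f_eq_some_of_mem (hM.1 a₂ b ha₂)
  have hcb : c ≠ b := by rintro rfl; exact hnot a₂ ha₂ hc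
  have hne : a ≠ a₂ := by rintro rfl; rw [ha₂] at hlt; exact lt_irrefl _ hlt
  have hlt₂ : rank pref a₂ (some c) < rank pref a₂ (M a₂) := by
    rw [← hc, rank_f]
    refine Nat.pos_of_ne_zero fun h => hcb ?_
    have := eq_f_of_rank_eq_zero (hM.1 a₂) h
    rw [ha₂, hc] at this
    exact (Option.some.inj this).symm
  -- `a` takes `b` from `a₂`, who takes their first choice `c`, evicting its holder
  obtain ⟨M', hM', hM'a, hM'a₂, hM'x⟩ : ∃ M', IsMatching pref M' ∧ M' a = some b ∧
      M' a₂ = some c ∧ ∀ x, x ≠ a → x ≠ a₂ → M x ≠ some c → M' x = M x := by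
    have hnb : ∀ x, x ≠ a₂ → M x ≠ some b := fun x hx h => hx (hM.eq_of_eq_some h ha₂)
    refine ⟨reassign (reassign M a b) a₂ c,
      (hM.reassign hb).reassign (mem_pref_of_f_eq_some hc), ?_, reassign_self, ?_⟩
    · rw [reassign_of_ne hne (by rw [reassign_self]; simpa using hcb.symm), reassign_self]
    · intro x hxa hxa₂ hxc
      rw [reassign_of_ne hxa₂, reassign_of_ne hxa (hnb x hxa₂)]
      rwa [reassign_of_ne hxa (hnb x hxa₂)]
  have := hpop.ncard_le_ncard hM' (I := {a, a₂}) (W := {x | M x = some c}) ?_ ?_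
  · rw [Set.ncard_pair hne] at this
    exact absurd (this.trans (hM.ncard_le_one c)) (by norm_num)
  · rintro x (rfl | rfl)
    · simpa [hM'a] using hlt
    · simpa [hM'a₂] using hlt₂
  · intro x (hx : rank pref x (M x) < rank pref x (M' x))
    by_contra hxc
    have hxa : x ≠ a := by rintro rfl; rw [hM'a] at hx; omega
    have hxa₂ : x ≠ a₂ := by rintro rfl; rw [hM'a₂] at hx; omega
    rw [hM'x x hxa hxa₂ hxc] at hx
    exact lt_irrefl _ hx

end Popular

section FirstChoices

variable {A B : Type*} [Fintype A] [Fintype B] [DecidableEq B] {pref : A → List B}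
  {M : A → Option B} {a : A} {b : B}

lemma mem_F_of_f_eq_some (h : f pref a = some b) : b ∈ F pref :=
  Finset.mem_filter.mpr ⟨Finset.mem_univ b, a, h⟩

lemma exists_f_eq_some_of_mem_F (h : b ∈ F pref) : ∃ a, f pref a = some b :=
  (Finset.mem_filter.mp h).2

lemma mem_pref_of_s_eq_some (h : s pref a = some b) : b ∈ pref a :=
  List.mem_of_find?_eq_some h

lemma notMem_F_of_s_eq_some (h : s pref a = some b) : b ∉ F pref := by
  simpa using List.find?_some h

lemma rank_s_le (hb : b ∈ pref a) (hbF : b ∉ F pref) :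
    rank pref a (s pref a) ≤ rank pref a (some b) := by
  cases hs : s pref a with
  | none => exact absurd (List.find?_eq_none.mp hs b hb) (by simpa using hbF)
  | some c => exact List.idxOf_le_idxOf_of_find?_eq_some hb (by simpa using hbF) hs

lemma mem_F_of_rank_lt_rank_s (hb : b ∈ pref a)
    (h : rank pref a (some b) < rank pref a (s pref a)) : b ∈ F pref := by
  by_contra hbF
  exact (rank_s_le hb hbF).not_gt h

def MatchesF (pref : A → List B) (M : A → Option B) : Prop :=
  ∀ b ∈ F pref, ∃ a, M a = some b ∧ f pref a = some b

lemma isPopular_of_isAPerfect_of_matchesF (hM : IsMatching pref M) (hAP : IsAPerfect pref M)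
    (hF : MatchesF pref M) : IsPopular pref M := by
  intro M' hM'
  set S := {a | rank pref a (M' a) < rank pref a (M a)}
  set T := {a | rank pref a (M a) < rank pref a (M' a)}
  have hS_some : ∀ a ∈ S, ∃ b, M' a = some b ∧ b ∈ F pref := by
    intro a (ha : rank pref a (M' a) < rank pref a (M a))
    obtain ⟨b, hb⟩ : ∃ b, M' a = some b := by
      refine Option.ne_none_iff_exists'.mp fun h => ?_
      rw [h] at ha
      exact (rank_le_rank_none (hM.1 a)).not_gt ha
    have hMa : M a = s pref a := (hAP a).resolve_left fun h => by
      rw [h, rank_f] at ha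
      exact Nat.not_lt_zero _ ha
    rw [hb, hMa] at ha
    exact ⟨b, hb, mem_F_of_rank_lt_rank_s (hM'.1 a b hb) ha⟩
  -- whoever gains the item `b ∈ F` under `M'` takes it from the person ranking it first
  have hST : M' '' S ⊆ M '' T := by
    rintro _ ⟨a, ha, rfl⟩
    obtain ⟨b, hb, hbF⟩ := hS_some a ha
    obtain ⟨a', hMa', hfa'⟩ := hF b hbF
    refine ⟨a', ?_, hMa'.trans hb.symm⟩
    show rank pref a' (M a') < rank pref a' (M' a')
    rw [hMa', ← hfa', rank_f]
    refine Nat.pos_of_ne_zero fun h => ?_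
    have hM'a' : M' a' = some b := (eq_f_of_rank_eq_zero (hM'.1 a') h).trans hfa'
    obtain rfl := hM'.eq_of_eq_some hM'a' hb
    have ha : rank pref a' (M' a') < rank pref a' (M a') := ha
    rw [hM'a', hMa'] at ha
    exact lt_irrefl _ ha
  have hinj : Set.InjOn M' S := fun a ha a' _ h => by
    obtain ⟨b, hb, -⟩ := hS_some a ha
    exact hM'.eq_of_eq_some hb (h ▸ hb)
  calc S.ncard = (M' '' S).ncard := hinj.ncard_image.symm
    _ ≤ (M '' T).ncard := Set.ncard_le_ncard hST
    _ ≤ T.ncard := Set.ncard_image_le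

variable [DecidableEq A]

lemma IsPopular.matchesF (hM : IsMatching pref M) (hpop : IsPopular pref M) : MatchesF pref M := by
  intro b hbF
  obtain ⟨a, ha⟩ := exists_f_eq_some_of_mem_F hbF
  by_cases hMa : M a = some b
  · exact ⟨a, hMa, ha⟩
  refine hpop.exists_eq_some_of_rank_lt hM (mem_pref_of_f_eq_some ha) ?_
  rw [← ha, rank_f]
  exact Nat.pos_of_ne_zero fun h => hMa ((eq_f_of_rank_eq_zero (hM.1 a) h).trans ha)

lemma IsPopular.isAPerfect (hM : IsMatching pref M) (hpop : IsPopular pref M) :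
    IsAPerfect pref M := by
  intro a
  rcases lt_trichotomy (rank pref a (M a)) (rank pref a (s pref a)) with hlt | heq | hgt
  · left
    obtain ⟨b, hb⟩ : ∃ b, M a = some b := by
      refine Option.ne_none_iff_exists'.mp fun h => ?_
      rw [h] at hlt
      exact (rank_le_rank_none fun _ => mem_pref_of_s_eq_some).not_gt hlt
    rw [hb] at hlt
    obtain ⟨a', hMa', hfa'⟩ := hpop.matchesF hM b (mem_F_of_rank_lt_rank_s (hM.1 a b hb) hlt)
    rw [hM.eq_of_eq_some hb hMa', hMa', hfa']
  · exact Or.inr (eq_of_rank_eq (hM.1 a) (fun _ => mem_pref_of_s_eq_some) heq)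
  · obtain ⟨c, hc⟩ : ∃ c, s pref a = some c := by
      refine Option.ne_none_iff_exists'.mp fun h => ?_
      rw [h] at hgt
      exact (rank_le_rank_none (hM.1 a)).not_gt hgt
    rw [hc] at hgt
    obtain ⟨a', -, hfa'⟩ := hpop.exists_eq_some_of_rank_lt hM (mem_pref_of_s_eq_some hc) hgt
    exact absurd (mem_F_of_f_eq_some hfa') (notMem_F_of_s_eq_some hc)

lemma exists_matchesF (hM : IsMatching pref M) (hAP : IsAPerfect pref M) :
    ∃ M, IsMatching pref M ∧ IsAPerfect pref M ∧ MatchesF pref M := by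
  obtain ⟨M, ⟨hM, hAP⟩, hmax⟩ := Set.exists_max_image
    {M | IsMatching pref M ∧ IsAPerfect pref M} (fun M => {a | M a = f pref a}.ncard)
    (Set.toFinite _) ⟨M, hM, hAP⟩
  refine ⟨M, hM, hAP, fun b hbF => ?_⟩
  by_contra! hnot
  obtain ⟨a, ha⟩ := exists_f_eq_some_of_mem_F hbF
  have hfree : ∀ x, M x ≠ some b := fun x hx => (hAP x).elim
    (fun h => hnot x hx (h ▸ hx))
    (fun h => notMem_F_of_s_eq_some (h ▸ hx) hbF)
  have hMx : ∀ x, x ≠ a → reassign M a b x = M x := fun x hx => reassign_of_ne hx (hfree x)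
  have hAP' : IsAPerfect pref (reassign M a b) := fun x => by
    by_cases hx : x = a
    · subst hx; exact Or.inl (reassign_self.trans ha.symm)
    · rw [hMx x hx]; exact hAP x
  have hsub : {x | M x = f pref x} ⊂ {x | reassign M a b x = f pref x} := by
    refine Set.ssubset_iff_of_subset (fun x (hx : M x = f pref x) => ?_) |>.mpr ⟨a, ?_, ?_⟩
    · have hxa : x ≠ a := by rintro rfl; exact hfree x (hx.trans ha)
      show reassign M a b x = f pref x
      rw [hMx x hxa, hx]
    · exact reassign_self.trans ha.symm
    · exact fun h => hfree a (h.trans ha)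
  exact (Set.ncard_lt_ncard hsub).not_ge (hmax _ ⟨hM.reassign (mem_pref_of_f_eq_some ha), hAP'⟩)

end FirstChoices

variable {A B : Type*} [Fintype A] [Fintype B] [DecidableEq A] [DecidableEq B]

theorem stmt_18_general (pref : A → List B) :
    (∃ M, IsMatching pref M ∧ IsPopular pref M) ↔
      (∃ M, IsMatching pref M ∧ IsAPerfect pref M) := by
  constructor
  · rintro ⟨M, hM, hpop⟩
    exact ⟨M, hM, hpop.isAPerfect hM⟩
  · rintro ⟨M, hM, hAP⟩
    obtain ⟨M', hM', hAP', hF'⟩ := exists_matchesF hM hAP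
    exact ⟨M', hM', isPopular_of_isAPerfect_of_matchesF hM' hAP' hF'⟩

/-- In an instance with strict (possibly incomplete) preference lists
augmented with last resort items, a popular matching exists if and only if
an `A`-perfect matching exists. -/
theorem stmt_18 (pref : A → List B) (hstrict : ∀ a, (pref a).Nodup) :
    (∃ M, IsMatching pref M ∧ IsPopular pref M) ↔
      (∃ M, IsMatching pref M ∧ IsAPerfect pref M) :=
  stmt_18_general pref

end Stmt18
end
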